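/- arXiv:2410.08395 — 4 statements merged into one kernel-verified Lean document; each statement's English description precedes it below -/
import Mathlib

section
/- Let f₁: ℝ^{d−k} → [0, ∞) be μ-strongly convex with f₁(0) = 0 (so 0 is its unique minimizer), and let f₂: ℝᵏ → [a, ∞) be continuous with a > 0. Define f(x₁,…,x_d) = f₂(x₁,…,x_k)·f₁(x_{k+1},…,x_d). Then the set of minimizers of f is {x : x_{k+1} = … = x_d = 0}, the closest minimizer to x is π(x) = (x₁,…,x_k, 0,…,0), and f is first-order (a·μ)-strongly convex with respect to the closest minimizer: ⟨∇f(x), x − π(x)⟩ ≥ f(x) − f(π(x)) + (aμ/2)‖x − π(x)‖². -/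
/-!
Because `f₂ > 0` and the strongly convex `f₁ ≥ 0` vanishes only at its unique minimizer `0`,
`f ≥ 0` vanishes exactly on the subspace `x₂ = 0`, and `π x` is the orthogonal projection onto it.
The displacement `x - π x = (0, x₂)` only moves the second factor, so
`⟪∇f x, x - π x⟫ = f₂ x₁ · Df₁(x₂) x₂`. The first-order strong convexity inequality for `f₁` between
`x₂` and `0` gives `Df₁(x₂) x₂ ≥ f₁ x₂ + μ/2 ‖x₂‖²`, and multiplying by `f₂ x₁ ≥ a` gives the claim.
-/

open RealInnerProductSpace

section FirstOrder

variable {E : Type*} [NormedAddCommGroup E] {s : Set E} {g : E → ℝ} {x y : E}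

lemma ConvexOn.add_le_of_hasFDerivAt [NormedSpace ℝ E] {L : E →L[ℝ] ℝ} (hg : ConvexOn ℝ s g)
    (hx : x ∈ s) (hy : y ∈ s) (hL : HasFDerivAt g L x) : g x + L (y - x) ≤ g y := by
  let ℓ : ℝ →ᵃ[ℝ] E := AffineMap.lineMap x y
  have hderiv : HasDerivAt (g ∘ ℓ) (L (y - x)) 0 := by
    refine HasFDerivAt.comp_hasDerivAt (0 : ℝ) ?_ AffineMap.hasDerivAt_lineMap
    simpa [ℓ] using hL
  have hslope := (hg.comp_affineMap ℓ).le_slope_of_hasDerivAt (x := 0) (y := 1)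
    (by simpa [ℓ] using hx) (by simpa [ℓ] using hy) one_pos hderiv
  simp only [slope_def_field, Function.comp_apply, AffineMap.lineMap_apply_one,
    AffineMap.lineMap_apply_zero, sub_zero, div_one, ℓ] at hslope
  linarith

lemma StrongConvexOn.add_le_of_hasFDerivAt [InnerProductSpace ℝ E] {L : E →L[ℝ] ℝ} {μ : ℝ}
    (hg : StrongConvexOn s μ g) (hx : x ∈ s) (hy : y ∈ s) (hL : HasFDerivAt g L x) :
    g x + L (y - x) + μ / 2 * ‖y - x‖ ^ 2 ≤ g y := by
  have hsq : HasFDerivAt (fun z : E ↦ μ / 2 * ‖z‖ ^ 2) ((μ / 2) • (2 • innerSL ℝ x)) x :=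
    (hasStrictFDerivAt_norm_sq x).hasFDerivAt.const_mul (μ / 2)
  have h := (strongConvexOn_iff_convex.mp hg).add_le_of_hasFDerivAt hx hy (hL.sub hsq)
  simp only [sub_apply, smul_apply, innerSL_apply_apply, smul_eq_mul, nsmul_eq_mul,
    Nat.cast_ofNat] at h
  rw [norm_sub_sq_real, inner_sub_right, real_inner_self_eq_norm_sq] at *
  rw [real_inner_comm] at h
  linarith

end FirstOrder

lemma WithLp.sub_toLp_fst_zero {p : ENNReal} {α β : Type*} [AddCommGroup α] [AddCommGroup β]
    (x : WithLp p (α × β)) : x - toLp p (x.ofLp.1, 0) = toLp p (0, x.ofLp.2) :=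
  WithLp.ofLp_injective p (by ext <;> simp)

lemma WithLp.inner_gradient_fst_mul_snd_toLp_zero {E F : Type*} [NormedAddCommGroup E]
    [InnerProductSpace ℝ E] [CompleteSpace E] [NormedAddCommGroup F] [InnerProductSpace ℝ F]
    [CompleteSpace F] {g : E → ℝ} {h : F → ℝ} {x : WithLp 2 (E × F)}
    (hg : DifferentiableAt ℝ g x.ofLp.1) (hh : DifferentiableAt ℝ h x.ofLp.2) (v : F) :
    ⟪gradient (fun z : WithLp 2 (E × F) ↦ g z.ofLp.1 * h z.ofLp.2) x, toLp 2 (0, v)⟫ =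
      g x.ofLp.1 * fderiv ℝ h x.ofLp.2 v := by
  have hprod : HasFDerivAt (fun z : WithLp 2 (E × F) ↦ g z.ofLp.1 * h z.ofLp.2) _ x :=
    ((hg.hasFDerivAt.comp _ hasFDerivAt_fst).mul (hh.hasFDerivAt.comp _ hasFDerivAt_snd)).comp x
      (WithLp.prodContinuousLinearEquiv 2 ℝ E F).hasFDerivAt
  rw [inner_gradient_left, hprod.fderiv]
  simp

theorem stmt_11 {k m : ℕ} (μ a : ℝ) (hμ : 0 < μ) (ha : 0 < a)
    (f₁ : EuclideanSpace ℝ (Fin m) → ℝ) (f₂ : EuclideanSpace ℝ (Fin k) → ℝ)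
    (hf₁C1 : ContDiff ℝ 1 f₁) (hf₂C1 : ContDiff ℝ 1 f₂)
    (hf₁nonneg : ∀ y, 0 ≤ f₁ y) (hf₁zero : f₁ 0 = 0)
    (hf₁sc : StrongConvexOn Set.univ μ f₁)
    (hf₂a : ∀ y, a ≤ f₂ y)
    (f : WithLp 2 (EuclideanSpace ℝ (Fin k) × EuclideanSpace ℝ (Fin m)) → ℝ)
    (hfdef : ∀ x, f x = f₂ x.ofLp.1 * f₁ x.ofLp.2)
    (π : WithLp 2 (EuclideanSpace ℝ (Fin k) × EuclideanSpace ℝ (Fin m)) →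
         WithLp 2 (EuclideanSpace ℝ (Fin k) × EuclideanSpace ℝ (Fin m)))
    (hπdef : ∀ x, π x = WithLp.toLp 2 (x.ofLp.1, 0)) :
    (∀ x, (∀ y, f x ≤ f y) ↔ x.ofLp.2 = 0) ∧
    (∀ x z, z.ofLp.2 = 0 → ‖x - π x‖ ≤ ‖x - z‖) ∧
    (∀ x, ⟪gradient f x, x - π x⟫ ≥ f x - f (π x) + a * μ / 2 * ‖x - π x‖ ^ 2) := by
  obtain rfl : f = fun x ↦ f₂ x.ofLp.1 * f₁ x.ofLp.2 := funext hfdef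
  obtain rfl : π = fun x ↦ WithLp.toLp 2 (x.ofLp.1, 0) := funext hπdef
  have hf₂pos y : 0 < f₂ y := ha.trans_le (hf₂a y)
  beta_reduce
  simp only [WithLp.sub_toLp_fst_zero, WithLp.norm_toLp_snd, hf₁zero, mul_zero, sub_zero]
  refine ⟨fun x ↦ ⟨fun hmin ↦ ?_, fun hx y ↦ ?_⟩, fun x z hz ↦ ?_, fun x ↦ ?_⟩
  · have hf₁x : f₁ x.ofLp.2 = 0 := by
      have := hmin (WithLp.toLp 2 (x.ofLp.1, 0))
      simp only [hf₁zero, mul_zero] at this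
      nlinarith [hf₂pos x.ofLp.1, hf₁nonneg x.ofLp.2]
    exact (hf₁sc.strictConvexOn hμ).eq_of_isMinOn (fun y _ ↦ hf₁x ▸ hf₁nonneg y)
      (fun y _ ↦ hf₁zero ▸ hf₁nonneg y) trivial trivial
  · rw [hx, hf₁zero, mul_zero]
    exact mul_nonneg (hf₂pos _).le (hf₁nonneg _)
  · calc ‖x.ofLp.2‖ = dist x.ofLp.2 z.ofLp.2 := by rw [hz, dist_zero_right]
      _ ≤ dist x z := WithLp.dist_snd_le x z
      _ = ‖x - z‖ := dist_eq_norm x z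
  · have hf₁diff := hf₁C1.differentiable one_ne_zero x.ofLp.2
    have htangent := hf₁sc.add_le_of_hasFDerivAt trivial trivial hf₁diff.hasFDerivAt (y := 0)
    simp only [zero_sub, map_neg, norm_neg, hf₁zero] at htangent
    rw [WithLp.inner_gradient_fst_mul_snd_toLp_zero (hf₂C1.differentiable one_ne_zero _) hf₁diff]
    calc f₂ x.ofLp.1 * f₁ x.ofLp.2 + a * μ / 2 * ‖x.ofLp.2‖ ^ 2
        ≤ f₂ x.ofLp.1 * (f₁ x.ofLp.2 + μ / 2 * ‖x.ofLp.2‖ ^ 2) := by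
          nlinarith [hf₂a x.ofLp.1, mul_nonneg hμ.le (sq_nonneg ‖x.ofLp.2‖)]
      _ ≤ f₂ x.ofLp.1 * fderiv ℝ f₁ x.ofLp.2 x.ofLp.2 := by
          gcongr
          · exact (hf₂pos _).le
          · linarith
end

section
/- For f(x) = (1 + ε sin(2R log x)) x²/2 (x > 0, extended evenly, f(0)=0) with ε√(1+4R²) < 1, the inequality x·f′(x) − f(x) ≥ (1/2)(1 − ε√(1+4R²)) x² holds for all x > 0; i.e., f is first-order μ-strongly convex with respect to its unique minimizer 0 with μ = 1 − ε√(1+4R²). -/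
/-! Since `log |x| = log x` in Mathlib, `f` is `(1 + ε sin(2R log x)) x² / 2` everywhere, so with
`θ = 2R log x` one computes `x f'(x) - f(x) = (1 + ε (sin θ + 2R cos θ)) x² / 2`, and
`sin θ + 2R cos θ ≥ -√(1 + 4R²)` by Cauchy–Schwarz. -/

open Real

theorem Real.neg_sqrt_le_mul_sin_add_mul_cos (a b θ : ℝ) :
    -√(a ^ 2 + b ^ 2) ≤ a * sin θ + b * cos θ :=
  neg_sqrt_le_of_sq_le <| by
    nlinarith [sq_nonneg (a * cos θ - b * sin θ), sin_sq_add_cos_sq θ]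

theorem hasDerivAt_one_add_mul_sin_log_mul_sq_div_two (R ε : ℝ) {x : ℝ} (hx : x ≠ 0) :
    HasDerivAt (fun y => (1 + ε * sin (2 * R * log y)) * y ^ 2 / 2)
      ((1 + ε * sin (2 * R * log x) + R * ε * cos (2 * R * log x)) * x) x := by
  have hsin : HasDerivAt (fun y => 1 + ε * sin (2 * R * log y))
      (ε * (cos (2 * R * log x) * (2 * R * x⁻¹))) x :=
    (((hasDerivAt_log hx).const_mul (2 * R)).sin.const_mul ε).const_add 1
  have hsq : HasDerivAt (fun y : ℝ => y ^ 2 / 2) x x := by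
    simpa using (hasDerivAt_pow 2 x).div_const 2
  simp_rw [mul_div_assoc]
  refine (hsin.mul hsq).congr_deriv ?_
  field_simp
  ring

theorem stmt_14_general (R ε : ℝ) (hε0 : 0 < ε)
    (f : ℝ → ℝ)
    (hf : ∀ x : ℝ, f x = (1 + ε * Real.sin (2 * R * Real.log |x|)) * x ^ 2 / 2) :
    ∀ x : ℝ, 0 < x →
      x * deriv f x - f x ≥ 1 / 2 * (1 - ε * Real.sqrt (1 + 4 * R ^ 2)) * x ^ 2 := by
  intro x hx
  set θ := 2 * R * log x
  have hf' : f = fun y => (1 + ε * sin (2 * R * log y)) * y ^ 2 / 2 := by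
    funext y; rw [hf, log_abs]
  have hderiv := (hasDerivAt_one_add_mul_sin_log_mul_sq_div_two R ε hx.ne').deriv
  have hidentity : x * deriv f x - f x = (1 + ε * (sin θ + 2 * R * cos θ)) * x ^ 2 / 2 := by
    rw [hf', hderiv]; ring
  have hbound : -√(1 + 4 * R ^ 2) ≤ sin θ + 2 * R * cos θ := by
    simpa [mul_pow, show (2 : ℝ) ^ 2 = 4 by norm_num] using
      neg_sqrt_le_mul_sin_add_mul_cos 1 (2 * R) θ
  calc 1 / 2 * (1 - ε * √(1 + 4 * R ^ 2)) * x ^ 2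
      = (1 + ε * -√(1 + 4 * R ^ 2)) * x ^ 2 / 2 := by ring
    _ ≤ (1 + ε * (sin θ + 2 * R * cos θ)) * x ^ 2 / 2 := by gcongr
    _ = x * deriv f x - f x := hidentity.symm

theorem stmt_14 (R ε : ℝ) (hR : 0 < R) (hε0 : 0 < ε) (hε1 : ε < 1)
    (hsmall : ε * Real.sqrt (1 + 4 * R ^ 2) < 1)
    (f : ℝ → ℝ)
    (hf : ∀ x : ℝ, f x = (1 + ε * Real.sin (2 * R * Real.log |x|)) * x ^ 2 / 2) :
    ∀ x : ℝ, 0 < x →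
      x * deriv f x - f x ≥ 1 / 2 * (1 - ε * Real.sqrt (1 + 4 * R ^ 2)) * x ^ 2 :=
  stmt_14_general R ε hε0 f hf
end

section
/- Let f: ℝᵈ → ℝ be C¹ with L-Lipschitz gradient and satisfy first-order μ-strong convexity with respect to an affine projection π(x) = Πx + x* (Π a linear orthogonal projection): ⟨∇f(x), x − π(x)⟩ ≥ f(x) − f(π(x)) + (μ/2)‖x − π(x)‖², with f(π(x)) = inf f. Suppose also ⟨∇f(x+v), v⟩ ≥ f(x+v) − f(x) − (ε/2)‖v‖² for all x, v, with ε ≤ √(μ/η). If the sequences are generated by x′ₙ = xₙ + √η vₙ, x_{n+1} = x′ₙ − η ∇f(x′ₙ), v_{n+1} = ρ(vₙ − √η ∇f(x′ₙ)) with η ≤ 1/L and ρ = (1−√(μη))/(1+√(μη)), then f(xₙ) − inf f ≤ (1−√(μη))ⁿ [f(x₀) − inf f + (μ/2)‖x₀ − π(x₀)‖²]. -/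
/-!
With `q = √(μη)` and the extrapolated point `z = x + (1 + q)/q · √η v`, the Lyapunov function
`f x - f* + μ/2 ‖z - π z‖² + (1 + q)/2 ‖Π v‖²` contracts by the factor `1 - q` at every step.
Its quadratic part splits orthogonally: on `V^⊥` it satisfies an exact identity of Nesterov's
estimate-sequence type, while on `V`, where strong convexity gives no control, the momentum is
merely damped by `ρ`. The function values enter only through the descent lemma at `x'`, the
strong convexity inequality at `x'` (weight `q`) and the mild non-convexity inequality between
`x` and `x'` (weight `1 - q`), whose `ε`-error is absorbed because `εη ≤ q`. As `v₀ = 0`, the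
Lyapunov function starts at `f x₀ - f* + μ/2 ‖x₀ - π x₀‖²`.
-/

open RealInnerProductSpace

section Descent

variable {E : Type*} [NormedAddCommGroup E] [InnerProductSpace ℝ E] [CompleteSpace E]
  {f : E → ℝ} {K : NNReal}

theorem apply_add_le_of_lipschitzWith_gradient (hf : Differentiable ℝ f)
    (hlip : LipschitzWith K (gradient f)) (u w : E) :
    f (u + w) ≤ f u + ⟪gradient f u, w⟫ + K / 2 * ‖w‖ ^ 2 := by
  set φ : ℝ → ℝ := fun t ↦
    f (u + t • w) - t * ⟪gradient f u, w⟫ - K / 2 * t ^ 2 * ‖w‖ ^ 2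
  have hφ (t : ℝ) :
      HasDerivAt φ (⟪gradient f (u + t • w) - gradient f u, w⟫ - K * t * ‖w‖ ^ 2) t := by
    have hline : HasDerivAt (fun t : ℝ ↦ u + t • w) w t := by
      simpa using ((hasDerivAt_id t).smul_const w).const_add u
    have hfline :
        HasDerivAt (fun t : ℝ ↦ f (u + t • w)) ⟪gradient f (u + t • w), w⟫ t := by
      have := (hf (u + t • w)).hasFDerivAt.comp_hasDerivAt t hline
      rwa [← inner_gradient_left] at this
    refine (hfline.sub ((hasDerivAt_id t).mul_const _) |>.sub
      (((hasDerivAt_pow 2 t).const_mul (K / 2 : ℝ)).mul_const (‖w‖ ^ 2))).congr_deriv ?_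
    simp only [inner_sub_left]
    ring
  have hanti : AntitoneOn φ (Set.Icc 0 1) := by
    refine antitoneOn_of_hasDerivWithinAt_nonpos (convex_Icc 0 1)
      (fun t _ ↦ (hφ t).continuousAt.continuousWithinAt)
      (fun t _ ↦ (hφ t).hasDerivWithinAt) ?_
    intro t ht
    rw [interior_Icc] at ht
    have hgrad : ‖gradient f (u + t • w) - gradient f u‖ ≤ K * (t * ‖w‖) := by
      simpa [← dist_eq_norm, norm_smul, abs_of_pos ht.1] using hlip.dist_le_mul (u + t • w) u
    nlinarith [real_inner_le_norm (gradient f (u + t • w) - gradient f u) w, norm_nonneg w]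
  have := hanti (by simp) (by simp) zero_le_one
  simp [φ, -inner_gradient_left] at this
  linarith

theorem apply_sub_smul_gradient_le (hf : Differentiable ℝ f)
    (hlip : LipschitzWith K (gradient f)) {η : ℝ} (hη : 0 ≤ η) (hηK : η * K ≤ 1) (u : E) :
    f (u - η • gradient f u) ≤ f u - η / 2 * ‖gradient f u‖ ^ 2 := by
  have h := apply_add_le_of_lipschitzWith_gradient hf hlip u (-(η • gradient f u))
  rw [← sub_eq_add_neg, inner_neg_right, real_inner_smul_right, real_inner_self_eq_norm_sq,
    norm_neg, norm_smul, Real.norm_of_nonneg hη] at h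
  nlinarith [mul_nonneg hη (sq_nonneg ‖gradient f u‖)]

end Descent

section Projection

variable {E : Type*} [NormedAddCommGroup E] [InnerProductSpace ℝ E] {P : E →L[ℝ] E}

theorem inner_eq_inner_sub_add_inner_apply (hPproj : ∀ x, P (P x) = P x)
    (hPsym : ∀ x y, ⟪P x, y⟫ = ⟪x, P y⟫) (u w : E) :
    ⟪u, w⟫ = ⟪u - P u, w - P w⟫ + ⟪P u, P w⟫ := by
  have h1 : ⟪P u, w⟫ = ⟪P u, P w⟫ := by rw [hPsym, hPsym, hPproj]
  have h2 : ⟪u, P w⟫ = ⟪P u, P w⟫ := by rw [hPsym, hPproj]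
  rw [inner_sub_left, inner_sub_right, inner_sub_right, h1, h2]
  ring

theorem norm_sq_eq_norm_sub_sq_add_norm_apply_sq (hPproj : ∀ x, P (P x) = P x)
    (hPsym : ∀ x y, ⟪P x, y⟫ = ⟪x, P y⟫) (u : E) :
    ‖u‖ ^ 2 = ‖u - P u‖ ^ 2 + ‖P u‖ ^ 2 := by
  simpa only [real_inner_self_eq_norm_sq] using
    inner_eq_inner_sub_add_inner_apply hPproj hPsym u u

variable {π : E → E} {xstar : E}

theorem apply_sub_affine_eq_zero (hπ : ∀ x, π x = P x + xstar) (hPproj : ∀ x, P (P x) = P x)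
    (hxstar : P xstar = 0) (u : E) : P (u - π u) = 0 := by
  simp [hπ, hPproj, hxstar]

theorem add_sub_affine_eq (hπ : ∀ x, π x = P x + xstar) (u w : E) :
    u + w - π (u + w) = u - π u + (w - P w) := by
  simp only [hπ, map_add]
  abel

end Projection

section MomentumAlgebra

variable {F : Type*} [NormedAddCommGroup F] [InnerProductSpace ℝ F]

theorem norm_sq_extrapolation_eq {μ η q s : ℝ} (hq : q ≠ 0) (hs : s ^ 2 = η)
    (hμη : μ * η = q ^ 2) (r w h : F) :
    μ / 2 * ‖r + (s / q) • w - (η / q) • h‖ ^ 2 =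
      (1 - q) * (μ / 2 * ‖r + ((1 + q) / q * s) • w‖ ^ 2) + q * (μ / 2 * ‖r + s • w‖ ^ 2)
        - q * ⟪h, r + s • w⟫ - (1 - q) * s * ⟪h, w⟫ + η / 2 * ‖h‖ ^ 2
        - (1 - q) * q / 2 * ‖w‖ ^ 2 := by
  simp only [← real_inner_self_eq_norm_sq, inner_add_left, inner_add_right, inner_sub_left,
    inner_sub_right, real_inner_smul_left, real_inner_smul_right, real_inner_comm r w,
    real_inner_comm r h, real_inner_comm w h]
  subst hs
  field_simp
  linear_combination (-2 * q * ⟪r, h⟫ - q * ⟪w, w⟫ + q ^ 2 * ⟪w, w⟫ - 2 * s * ⟪w, h⟫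
    + s ^ 2 * ⟪h, h⟫) * hμη

theorem norm_sq_momentum_le {q s η : ℝ} (hq0 : 0 ≤ q) (hq1 : q ≤ 1) (hs : s ^ 2 = η)
    (p k : F) :
    (1 + q) / 2 * ‖((1 - q) / (1 + q)) • (p - s • k)‖ ^ 2 ≤
      (1 - q) / 2 * ‖p‖ ^ 2 - (1 - q) * s * ⟪k, p⟫ + η / 2 * ‖k‖ ^ 2 := by
  have hρ : (1 + q) / 2 * ((1 - q) / (1 + q)) ^ 2 ≤ (1 - q) / 2 := by
    rw [div_pow, mul_div_assoc', div_le_div_iff₀ (by positivity) (by positivity)]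
    nlinarith [mul_nonneg (mul_nonneg hq0 (sub_nonneg.2 hq1)) (by linarith : (0 : ℝ) ≤ 1 + q)]
  have hexpand : ‖p - s • k‖ ^ 2 = ‖p‖ ^ 2 - 2 * s * ⟪k, p⟫ + η * ‖k‖ ^ 2 := by
    rw [norm_sub_sq_real, real_inner_smul_right, norm_smul, mul_pow, Real.norm_eq_abs, sq_abs,
      hs, real_inner_comm]
    ring
  calc (1 + q) / 2 * ‖((1 - q) / (1 + q)) • (p - s • k)‖ ^ 2
      = (1 + q) / 2 * ((1 - q) / (1 + q)) ^ 2 * ‖p - s • k‖ ^ 2 := by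
        rw [norm_smul, mul_pow, Real.norm_eq_abs, sq_abs, mul_assoc]
    _ ≤ (1 - q) / 2 * ‖p - s • k‖ ^ 2 := by gcongr
    _ ≤ _ := by
      rw [hexpand]
      nlinarith [mul_nonneg (mul_nonneg hq0 (hs ▸ sq_nonneg s)) (sq_nonneg ‖k‖)]

theorem add_smul_momentum_eq {q s η : ℝ} (hq : q ≠ 0) (hq' : 1 + q ≠ 0) (hs : s ^ 2 = η)
    (x v g : F) :
    x + s • v - η • g + ((1 + q) / q * s) • (((1 - q) / (1 + q)) • (v - s • g)) =
      x + (s / q) • v - (η / q) • g := by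
  subst hs
  match_scalars <;> field_simp <;> ring

end MomentumAlgebra

section Lyapunov

variable {E : Type*} [NormedAddCommGroup E] [InnerProductSpace ℝ E]

noncomputable def nesterovEnergy (P : E →L[ℝ] E) (π : E → E) (μ η : ℝ) (x v : E) : ℝ :=
  let q := √(μ * η)
  let z := x + ((1 + q) / q * √η) • v
  μ / 2 * ‖z - π z‖ ^ 2 + (1 + q) / 2 * ‖P v‖ ^ 2

variable {P : E →L[ℝ] E} {π : E → E} {xstar : E} {μ η : ℝ}

theorem nesterovEnergy_nonneg (hμ : 0 ≤ μ) (x v : E) : 0 ≤ nesterovEnergy P π μ η x v := by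
  simp only [nesterovEnergy]
  positivity

theorem nesterovEnergy_zero_right (x : E) :
    nesterovEnergy P π μ η x 0 = μ / 2 * ‖x - π x‖ ^ 2 := by
  simp [nesterovEnergy]

theorem nesterovEnergy_step_le (hPproj : ∀ x, P (P x) = P x)
    (hPsym : ∀ x y, ⟪P x, y⟫ = ⟪x, P y⟫) (hxstar : P xstar = 0) (hπ : ∀ x, π x = P x + xstar)
    (hμ : 0 < μ) (hη : 0 < η) (hμη : μ * η ≤ 1) (x v g : E) :
    let q := √(μ * η)
    let x' := x + √η • v
    nesterovEnergy P π μ η (x' - η • g) (((1 - q) / (1 + q)) • (v - √η • g)) ≤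
      (1 - q) * nesterovEnergy P π μ η x v + q * (μ / 2 * ‖x' - π x'‖ ^ 2 - ⟪g, x' - π x'⟫)
        - (1 - q) * √η * ⟪g, v⟫ + η / 2 * ‖g‖ ^ 2 - (1 - q) * q / 2 * ‖v‖ ^ 2 := by
  simp only [nesterovEnergy]
  set q := √(μ * η)
  set s := √η
  have hs : s ^ 2 = η := Real.sq_sqrt hη.le
  have hq0 : 0 < q := Real.sqrt_pos.2 (by positivity)
  have hres (c : ℝ) : x + c • v - π (x + c • v) = x - π x + c • (v - P v) := by
    rw [add_sub_affine_eq hπ, map_smul, smul_sub]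
  have hres' : x + (s / q) • v - (η / q) • g - π (x + (s / q) • v - (η / q) • g) =
      x - π x + (s / q) • (v - P v) - (η / q) • (g - P g) := by
    rw [add_sub_assoc, add_sub_affine_eq hπ]
    simp only [map_sub, map_smul, smul_sub]
    abel
  have hga : ⟪g, x + s • v - π (x + s • v)⟫ = ⟪g - P g, x - π x + s • (v - P v)⟫ := by
    rw [inner_eq_inner_sub_add_inner_apply hPproj hPsym, apply_sub_affine_eq_zero hπ hPproj hxstar,
      inner_zero_right, add_zero, sub_zero, hres]
  have hperp := norm_sq_extrapolation_eq hq0.ne' hs (Real.sq_sqrt (by positivity)).symm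
    (x - π x) (v - P v) (g - P g)
  have hpar := norm_sq_momentum_le hq0.le (Real.sqrt_le_one.2 hμη) hs (P v) (P g)
  rw [add_smul_momentum_eq hq0.ne' (by positivity) hs, hres', hga, hres, hres, map_smul,
    map_sub, map_smul]
  linear_combination hperp + hpar
    + (1 - q) * s * inner_eq_inner_sub_add_inner_apply hPproj hPsym g v
    - η / 2 * norm_sq_eq_norm_sub_sq_add_norm_apply_sq hPproj hPsym g
    + (1 - q) * q / 2 * norm_sq_eq_norm_sub_sq_add_norm_apply_sq hPproj hPsym v

variable [CompleteSpace E] {f : E → ℝ} {ε fstar : ℝ}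

theorem nesterov_step_le (hPproj : ∀ x, P (P x) = P x)
    (hPsym : ∀ x y, ⟪P x, y⟫ = ⟪x, P y⟫) (hxstar : P xstar = 0) (hπ : ∀ x, π x = P x + xstar)
    (hμ : 0 < μ) (hη : 0 < η) (hμη : μ * η ≤ 1) (hεη : ε * η ≤ √(μ * η))
    (hdesc : ∀ u, f (u - η • gradient f u) ≤ f u - η / 2 * ‖gradient f u‖ ^ 2)
    (hsc : ∀ u, f u - fstar + μ / 2 * ‖u - π u‖ ^ 2 ≤ ⟪gradient f u, u - π u⟫)
    (hnc : ∀ u w, f (u + w) - f u - ε / 2 * ‖w‖ ^ 2 ≤ ⟪gradient f (u + w), w⟫) (x v : E) :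
    let q := √(μ * η)
    let x' := x + √η • v
    let g := gradient f x'
    f (x' - η • g) - fstar
        + nesterovEnergy P π μ η (x' - η • g) (((1 - q) / (1 + q)) • (v - √η • g)) ≤
      (1 - q) * (f x - fstar + nesterovEnergy P π μ η x v) := by
  intro q x' g
  have hq0 : 0 ≤ q := Real.sqrt_nonneg _
  have hq1 : q ≤ 1 := Real.sqrt_le_one.2 hμη
  have hnc' : f x' - f x - ε / 2 * η * ‖v‖ ^ 2 ≤ √η * ⟪g, v⟫ := by
    have := hnc x (√η • v)
    rwa [real_inner_smul_right, norm_smul, Real.norm_of_nonneg (Real.sqrt_nonneg η), mul_pow,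
      Real.sq_sqrt hη.le, ← mul_assoc] at this
  have hεv : ε * η * ‖v‖ ^ 2 ≤ q * ‖v‖ ^ 2 := mul_le_mul_of_nonneg_right hεη (sq_nonneg _)
  linear_combination nesterovEnergy_step_le hPproj hPsym hxstar hπ hμ hη hμη x v g
    + hdesc x' + mul_le_mul_of_nonneg_left (hsc x') hq0
    + mul_le_mul_of_nonneg_left hnc' (sub_nonneg.2 hq1)
    + mul_le_mul_of_nonneg_left hεv (sub_nonneg.2 hq1) / 2

end Lyapunov

theorem stmt_16_general {d : ℕ} (f : EuclideanSpace ℝ (Fin d) → ℝ) (L μ η ε : ℝ)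
    (hL : 0 < L) (hμ : 0 < μ) (hμL : μ ≤ L) (hη : 0 < η) (hηL : η ≤ 1 / L)
    (hεbound : ε ≤ Real.sqrt (μ / η))
    (hf : ContDiff ℝ 1 f)
    (hlip : LipschitzWith (Real.toNNReal L) (gradient f))
    (P : EuclideanSpace ℝ (Fin d) →L[ℝ] EuclideanSpace ℝ (Fin d))
    (hPproj : ∀ x, P (P x) = P x)
    (hPsym : ∀ x y, ⟪P x, y⟫ = ⟪x, P y⟫)
    (xstar : EuclideanSpace ℝ (Fin d)) (hxstar : P xstar = 0)
    (π : EuclideanSpace ℝ (Fin d) → EuclideanSpace ℝ (Fin d))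
    (hπdef : ∀ x, π x = P x + xstar)
    (hπmin : ∀ x y, f (π x) ≤ f y)
    (hsc : ∀ x, ⟪gradient f x, x - π x⟫ ≥ f x - f (π x) + μ / 2 * ‖x - π x‖ ^ 2)
    (hnc : ∀ x v, ⟪gradient f (x + v), v⟫ ≥ f (x + v) - f x - ε / 2 * ‖v‖ ^ 2)
    (ρ : ℝ) (hρ : ρ = (1 - Real.sqrt (μ * η)) / (1 + Real.sqrt (μ * η)))
    (x x' v : ℕ → EuclideanSpace ℝ (Fin d))
    (hv0 : v 0 = 0)
    (hx' : ∀ n, x' n = x n + Real.sqrt η • v n)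
    (hxrec : ∀ n, x (n + 1) = x' n - η • gradient f (x' n))
    (hvrec : ∀ n, v (n + 1) = ρ • (v n - Real.sqrt η • gradient f (x' n))) :
    ∀ n, f (x n) - f (π (x 0)) ≤
      (1 - Real.sqrt (μ * η)) ^ n *
        (f (x 0) - f (π (x 0)) + μ / 2 * ‖x 0 - π (x 0)‖ ^ 2) := by
  intro n
  set fstar := f (π (x 0))
  have hmin (y) : f (π y) = fstar := le_antisymm (hπmin y _) (hπmin _ (π y))
  have hηL' : η * L ≤ 1 := (le_div_iff₀ hL).1 hηL
  have hμη : μ * η ≤ 1 := by nlinarith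
  have hεη : ε * η ≤ √(μ * η) := by
    calc ε * η ≤ √(μ / η) * η := by gcongr
      _ = √(μ * η) := by
        rw [← Real.sqrt_sq hη.le, ← Real.sqrt_mul (by positivity), Real.sqrt_sq hη.le]
        field_simp
  have hdesc := apply_sub_smul_gradient_le (hf.differentiable one_ne_zero) hlip hη.le
    (by rwa [Real.coe_toNNReal _ hL.le])
  let Φ (k : ℕ) := f (x k) - fstar + nesterovEnergy P π μ η (x k) (v k)
  have hstep (k : ℕ) : Φ (k + 1) ≤ (1 - √(μ * η)) * Φ k := by
    simp only [Φ, hxrec, hvrec, hx', hρ]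
    exact nesterov_step_le hPproj hPsym hxstar hπdef hμ hη hμη hεη hdesc
      (fun u ↦ by rw [← hmin u]; exact hsc u) hnc (x k) (v k)
  calc f (x n) - fstar ≤ Φ n := le_add_of_nonneg_right (nesterovEnergy_nonneg hμ.le _ _)
    _ ≤ (1 - √(μ * η)) ^ n * Φ 0 :=
        le_geom (sub_nonneg.2 (Real.sqrt_le_one.2 hμη)) n fun k _ ↦ hstep k
    _ = _ := by simp only [Φ, hv0, nesterovEnergy_zero_right]

theorem stmt_16 {d : ℕ} (f : EuclideanSpace ℝ (Fin d) → ℝ) (L μ η ε : ℝ)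
    (hL : 0 < L) (hμ : 0 < μ) (hμL : μ ≤ L) (hη : 0 < η) (hηL : η ≤ 1 / L)
    (hε : 0 ≤ ε) (hεbound : ε ≤ Real.sqrt (μ / η))
    (hf : ContDiff ℝ 1 f)
    (hlip : LipschitzWith (Real.toNNReal L) (gradient f))
    (P : EuclideanSpace ℝ (Fin d) →L[ℝ] EuclideanSpace ℝ (Fin d))
    (hPproj : ∀ x, P (P x) = P x)
    (hPsym : ∀ x y, ⟪P x, y⟫ = ⟪x, P y⟫)
    (xstar : EuclideanSpace ℝ (Fin d)) (hxstar : P xstar = 0)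
    (π : EuclideanSpace ℝ (Fin d) → EuclideanSpace ℝ (Fin d))
    (hπdef : ∀ x, π x = P x + xstar)
    (hπmin : ∀ x y, f (π x) ≤ f y)
    (hsc : ∀ x, ⟪gradient f x, x - π x⟫ ≥ f x - f (π x) + μ / 2 * ‖x - π x‖ ^ 2)
    (hnc : ∀ x v, ⟪gradient f (x + v), v⟫ ≥ f (x + v) - f x - ε / 2 * ‖v‖ ^ 2)
    (ρ : ℝ) (hρ : ρ = (1 - Real.sqrt (μ * η)) / (1 + Real.sqrt (μ * η)))
    (x x' v : ℕ → EuclideanSpace ℝ (Fin d))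
    (hv0 : v 0 = 0)
    (hx' : ∀ n, x' n = x n + Real.sqrt η • v n)
    (hxrec : ∀ n, x (n + 1) = x' n - η • gradient f (x' n))
    (hvrec : ∀ n, v (n + 1) = ρ • (v n - Real.sqrt η • gradient f (x' n))) :
    ∀ n, f (x n) - f (π (x 0)) ≤
      (1 - Real.sqrt (μ * η)) ^ n *
        (f (x 0) - f (π (x 0)) + μ / 2 * ‖x 0 - π (x 0)‖ ^ 2) :=
  stmt_16_general f L μ η ε hL hμ hμL hη hηL hεbound hf hlip P hPproj hPsym xstar hxstar π hπdef
    hπmin hsc hnc ρ hρ x x' v hv0 hx' hxrec hvrec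
end

section
/- Let x solve the heavy ball ODE ẍ + 2√μ ẋ = −∇f(x), ẋ(0) = 0, on the sublevel set U_α where f is first-order μ-strongly convex with respect to the C¹ closest-point projection π onto its manifold of minimizers, and assume (i) ⟨ẋ, d/dt π(x)⟩ ≥ 0 and (ii) ⟨x − π(x), d/dt π(x)⟩ = 0 along the trajectory. Then the Lyapunov function L(t) = f(x(t)) − inf f + (1/2)‖ẋ(t) + √μ (x(t) − π(x(t)))‖² satisfies L′(t) ≤ −√μ L(t), and hence f(x(t)) − inf f ≤ e^{−√μ t} (f(x₀) − inf f + (μ/2) dist(x₀, M)²). -/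
/-!
Since `f ∘ π` is the constant `inf f`, differentiating `L = f(x) - inf f + ‖ẋ + √μ (x - π x)‖² / 2`
along `ẍ = -2√μ ẋ - ∇f(x)` gives
`L' + √μ L = -√μ (‖ẋ‖² / 2 + ⟪ẋ, ż⟫ + ⟪∇f(x), x - z⟫ - (f(x) - inf f) - μ/2 ‖x - z‖²)`
with `z = π x` (the term `⟪x - z, ż⟫` vanishes), and every summand in the bracket is nonnegative
by (i) and strong convexity. Grönwall then yields `L(t) ≤ e^{-√μ t} L(0)`, and `ẋ(0) = 0`
evaluates `L(0)`.
-/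

open RealInnerProductSpace

theorem le_exp_mul_of_deriv_le_neg_mul {L : ℝ → ℝ} {c t : ℝ}
    (hL : ∀ s, 0 ≤ s → DifferentiableAt ℝ L s) (hdecay : ∀ s, 0 ≤ s → deriv L s ≤ -c * L s)
    (ht : 0 ≤ t) : L t ≤ Real.exp (-c * t) * L 0 := by
  have h := le_gronwallBound_of_liminf_deriv_right_le (f' := deriv L) (K := -c) (ε := 0) (b := t)
    (fun s hs => (hL s hs.1).continuousAt.continuousWithinAt)
    (fun s hs _ hr => (hL s hs.1).hasDerivAt.hasDerivWithinAt.liminf_right_slope_le hr) le_rfl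
    (fun s hs => by simpa using hdecay s hs.1) t ⟨ht, le_rfl⟩
  rwa [gronwallBound_ε0, sub_zero, mul_comm] at h

section
variable {E : Type*} [NormedAddCommGroup E] [InnerProductSpace ℝ E]

theorem hasDerivAt_heavyBall_lyapunov [CompleteSpace E] {f : E → ℝ} {x z : ℝ → E} {a z' : E}
    {m c t : ℝ} (hf : DifferentiableAt ℝ f (x t)) (hx : DifferentiableAt ℝ x t)
    (hv : HasDerivAt (deriv x) a t) (hz : HasDerivAt z z' t) :
    HasDerivAt (fun s => f (x s) - m + 1 / 2 * ‖deriv x s + c • (x s - z s)‖ ^ 2)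
      (⟪gradient f (x t), deriv x t⟫ +
        ⟪deriv x t + c • (x t - z t), a + c • (deriv x t - z')⟫) t := by
  have hfx : HasDerivAt (fun s => f (x s)) ⟪gradient f (x t), deriv x t⟫ t := by
    rw [inner_gradient_left]
    exact hf.hasFDerivAt.comp_hasDerivAt t hx.hasDerivAt
  have hw : HasDerivAt (fun s => ‖deriv x s + c • (x s - z s)‖ ^ 2)
      (2 * ⟪deriv x t + c • (x t - z t), a + c • (deriv x t - z')⟫) t :=
    (hv.add ((hx.hasDerivAt.sub hz).const_smul c)).norm_sq
  exact ((hfx.sub_const m).fun_add (hw.const_mul (1 / 2))).congr_deriv (by ring)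

theorem heavyBall_lyapunov_deriv_le_neg_mul {g v u z' : E} {c e : ℝ} (hc : 0 ≤ c)
    (hvz : 0 ≤ ⟪v, z'⟫) (huz : ⟪u, z'⟫ = 0) (hsc : e + c ^ 2 / 2 * ‖u‖ ^ 2 ≤ ⟪g, u⟫) :
    ⟪g, v⟫ + ⟪v + c • u, -((2 * c) • v) - g + c • (v - z')⟫ ≤
      -c * (e + 1 / 2 * ‖v + c • u‖ ^ 2) := by
  simp only [inner_add_left, inner_add_right, inner_sub_right, real_inner_smul_left,
    real_inner_smul_right, inner_neg_right, ← real_inner_self_eq_norm_sq] at hsc ⊢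
  rw [real_inner_comm g u, real_inner_comm g v, real_inner_comm u v, huz]
  nlinarith [mul_nonneg hc hvz, mul_nonneg hc (sub_nonneg.2 hsc),
    mul_nonneg hc (real_inner_self_nonneg (x := v))]

end

theorem stmt_19_general {d : ℕ} (f : EuclideanSpace ℝ (Fin d) → ℝ) (μ : ℝ) (hμ : 0 < μ)
    (hf : ContDiff ℝ 1 f)
    (U : Set (EuclideanSpace ℝ (Fin d)))
    (π : EuclideanSpace ℝ (Fin d) → EuclideanSpace ℝ (Fin d))
    (hπmin : ∀ y z, f (π y) ≤ f z)
    (hsc : ∀ y ∈ U, ⟪gradient f y, y - π y⟫ ≥ f y - f (π y) + μ / 2 * ‖y - π y‖ ^ 2)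
    (x : ℝ → EuclideanSpace ℝ (Fin d)) (hx : ContDiff ℝ 2 x)
    (hxU : ∀ t : ℝ, 0 ≤ t → x t ∈ U)
    (hode : ∀ t : ℝ, 0 ≤ t →
      deriv (deriv x) t = -((2 * Real.sqrt μ) • deriv x t) - gradient f (x t))
    (hv0 : deriv x 0 = 0)
    (hzdiff : ∀ t : ℝ, 0 ≤ t → DifferentiableAt ℝ (fun s => π (x s)) t)
    (htang : ∀ t : ℝ, 0 ≤ t → 0 ≤ ⟪deriv x t, deriv (fun s => π (x s)) t⟫)
    (horth : ∀ t : ℝ, 0 ≤ t → ⟪x t - π (x t), deriv (fun s => π (x s)) t⟫ = 0)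
    (Lf : ℝ → ℝ)
    (hLf : ∀ t, Lf t = f (x t) - f (π (x t)) +
      1 / 2 * ‖deriv x t + Real.sqrt μ • (x t - π (x t))‖ ^ 2) :
    (∀ t : ℝ, 0 ≤ t → deriv Lf t ≤ -Real.sqrt μ * Lf t) ∧
    (∀ t : ℝ, 0 ≤ t → f (x t) - f (π (x t)) ≤
      Real.exp (-Real.sqrt μ * t) *
        (f (x 0) - f (π (x 0)) + μ / 2 * ‖x 0 - π (x 0)‖ ^ 2)) := by
  set c := Real.sqrt μ
  have hc2 : c ^ 2 = μ := Real.sq_sqrt hμ.le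
  have hmin : ∀ y, f (π y) = f (π (x 0)) := fun y => le_antisymm (hπmin y _) (hπmin _ _)
  have hLf' : Lf = fun s =>
      f (x s) - f (π (x 0)) + 1 / 2 * ‖deriv x s + c • (x s - π (x s))‖ ^ 2 :=
    funext fun s => by rw [hLf, hmin]
  have hLyap : ∀ t, 0 ≤ t → ∃ D, HasDerivAt Lf D t ∧ D ≤ -c * Lf t := by
    intro t ht
    have hv := ((hx.deriv' (n := 1)).differentiable one_ne_zero t).hasDerivAt
    refine ⟨_, hLf' ▸ hasDerivAt_heavyBall_lyapunov (hf.differentiable one_ne_zero _)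
      (hx.differentiable two_ne_zero _) hv (hzdiff t ht).hasDerivAt, ?_⟩
    rw [hode t ht, hLf t]
    exact heavyBall_lyapunov_deriv_le_neg_mul (Real.sqrt_nonneg μ) (htang t ht) (horth t ht)
      (by rw [hc2]; exact hsc _ (hxU t ht))
  have hdecay : ∀ t, 0 ≤ t → deriv Lf t ≤ -c * Lf t := fun t ht => by
    obtain ⟨D, hD, hle⟩ := hLyap t ht
    rwa [hD.deriv]
  refine ⟨hdecay, fun t ht => ?_⟩
  calc f (x t) - f (π (x t)) ≤ Lf t := by rw [hLf t]; exact le_add_of_nonneg_right (by positivity)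
    _ ≤ Real.exp (-c * t) * Lf 0 :=
      le_exp_mul_of_deriv_le_neg_mul (fun s hs => (hLyap s hs).choose_spec.1.differentiableAt)
        hdecay ht
    _ = _ := by rw [hLf 0, hv0, zero_add, norm_smul, mul_pow, Real.norm_eq_abs, sq_abs, hc2]; ring

theorem stmt_19 {d : ℕ} (f : EuclideanSpace ℝ (Fin d) → ℝ) (μ α : ℝ) (hμ : 0 < μ)
    (hf : ContDiff ℝ 1 f)
    (U : Set (EuclideanSpace ℝ (Fin d))) (hU : U = {y | f y < α})
    (π : EuclideanSpace ℝ (Fin d) → EuclideanSpace ℝ (Fin d))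
    (hπC1 : ContDiffOn ℝ 1 π U)
    (hπmin : ∀ y z, f (π y) ≤ f z)
    (hsc : ∀ y ∈ U, ⟪gradient f y, y - π y⟫ ≥ f y - f (π y) + μ / 2 * ‖y - π y‖ ^ 2)
    (x : ℝ → EuclideanSpace ℝ (Fin d)) (hx : ContDiff ℝ 2 x)
    (hxU : ∀ t : ℝ, 0 ≤ t → x t ∈ U)
    (hode : ∀ t : ℝ, 0 ≤ t →
      deriv (deriv x) t = -((2 * Real.sqrt μ) • deriv x t) - gradient f (x t))
    (hv0 : deriv x 0 = 0)
    (hzdiff : ∀ t : ℝ, 0 ≤ t → DifferentiableAt ℝ (fun s => π (x s)) t)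
    (htang : ∀ t : ℝ, 0 ≤ t → 0 ≤ ⟪deriv x t, deriv (fun s => π (x s)) t⟫)
    (horth : ∀ t : ℝ, 0 ≤ t → ⟪x t - π (x t), deriv (fun s => π (x s)) t⟫ = 0)
    (Lf : ℝ → ℝ)
    (hLf : ∀ t, Lf t = f (x t) - f (π (x t)) +
      1 / 2 * ‖deriv x t + Real.sqrt μ • (x t - π (x t))‖ ^ 2) :
    (∀ t : ℝ, 0 ≤ t → deriv Lf t ≤ -Real.sqrt μ * Lf t) ∧
    (∀ t : ℝ, 0 ≤ t → f (x t) - f (π (x t)) ≤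
      Real.exp (-Real.sqrt μ * t) *
        (f (x 0) - f (π (x 0)) + μ / 2 * ‖x 0 - π (x 0)‖ ^ 2)) :=
  stmt_19_general f μ hμ hf U π hπmin hsc x hx hxU hode hv0 hzdiff htang horth Lf hLf
end
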